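/- arXiv:1704.06164 — 3 statements merged into one kernel-verified Lean document; each statement's English description precedes it below -/
import Mathlib

section
/- Let Σ_X = [[200,100],[100,51]], Σ_Z = [[200,0],[0,1]], and B = (1/20)·[[10,5],[5,17]] be real 2×2 matrices, and set A = B·B. Then det(Σ_X + B·Σ_Z·B)^(1/2) < det(I - A)^(1/2)·det(Σ_X)^(1/2) + det(A)^(1/2)·det(Σ_X + Σ_Z)^(1/2). (This gives a counterexample to the matrix-parameter generalization of Costa's EPI for Gaussian inputs.) -/
open Matrix

theorem stmt_0 :
    let SX : Matrix (Fin 2) (Fin 2) ℝ := !![200, 100; 100, 51]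
    let SZ : Matrix (Fin 2) (Fin 2) ℝ := !![200, 0; 0, 1]
    let B : Matrix (Fin 2) (Fin 2) ℝ := (1 / 20 : ℝ) • !![10, 5; 5, 17]
    let A : Matrix (Fin 2) (Fin 2) ℝ := B * B
    Real.sqrt (SX + B * SZ * B).det <
      Real.sqrt (1 - A).det * Real.sqrt SX.det +
        Real.sqrt A.det * Real.sqrt (SX + SZ).det := by
  intro SX SZ B A
  have h1 : (SX + B * SZ * B).det = 61035000 / 160000 := by
    simp [SX, SZ, B, Matrix.det_fin_two, Matrix.add_apply, Matrix.mul_apply,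
      Fin.sum_univ_two, Matrix.smul_apply]
    norm_num
  have h2 : A.det = 21025 / 160000 := by
    simp [A, B, Matrix.det_fin_two, Matrix.mul_apply, Fin.sum_univ_two,
      Matrix.smul_apply]
    norm_num
  have h3 : (SX + SZ).det = 10800 := by
    simp [SX, SZ, Matrix.det_fin_two, Matrix.add_apply]
    norm_num
  have hL : Real.sqrt (SX + B * SZ * B).det < 20 := by
    rw [h1]
    rw [show (20 : ℝ) = Real.sqrt 400 by
      rw [show (400:ℝ) = 20^2 by norm_num, Real.sqrt_sq]; norm_num]
    apply Real.sqrt_lt_sqrt <;> norm_num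
  have hR : (20 : ℝ) < Real.sqrt A.det * Real.sqrt (SX + SZ).det := by
    rw [h2, h3, ← Real.sqrt_mul (by norm_num)]
    rw [show (20 : ℝ) = Real.sqrt 400 by
      rw [show (400:ℝ) = 20^2 by norm_num, Real.sqrt_sq]; norm_num]
    apply Real.sqrt_lt_sqrt <;> norm_num
  have h0 : 0 ≤ Real.sqrt (1 - A).det * Real.sqrt SX.det :=
    mul_nonneg (Real.sqrt_nonneg _) (Real.sqrt_nonneg _)
  linarith
end

section
/- Let A and Σ_Z be commuting real symmetric positive definite n×n matrices with A ⪯ I, and let Σ_X be real symmetric positive definite. Then det(Σ_X + A^{1/2}·Σ_Z·A^{1/2})^(1/n) ≥ det(I−A)^(1/n)·det(Σ_X)^(1/n) + det(A)^(1/n)·det(Σ_X + Σ_Z)^(1/n). (Gaussian case of the corrected vector Costa EPI.) -/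
/-!
Write `T = A^{1/2}`. Woodbury's determinant identity gives
`det (Σ_X + T Σ_Z T) = det Σ_X · det Σ_Z · det (Σ_Z⁻¹ + T Σ_X⁻¹ T)`, and since `T` commutes with
`Σ_Z`,
`Σ_Z⁻¹ + T Σ_X⁻¹ T = (I - A) Σ_Z⁻¹ + T (Σ_Z⁻¹ + Σ_X⁻¹) T`,
a sum of two positive semidefinite matrices with determinants `det (I - A) / det Σ_Z` and
`det A · det (Σ_X + Σ_Z) / (det Σ_X · det Σ_Z)`. Minkowski's determinant inequality
`det P ^ (1/n) + det Q ^ (1/n) ≤ det (P + Q) ^ (1/n)` then gives the claim. After a congruence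
Minkowski's inequality reduces to `Q = I`, where it is the superadditivity
`1 + (∏ xᵢ) ^ (1/n) ≤ (∏ (1 + xᵢ)) ^ (1/n)` of the geometric mean, a consequence of AM-GM.
-/

open Matrix

/-- The square root of a positive semidefinite matrix, as defined in the older Mathlib
(`Matrix.PosSemidef.sqrt`, removed since). -/
noncomputable def Matrix.PosSemidef.sqrt {n : Type*} [Fintype n] [DecidableEq n]
    {A : Matrix n n ℝ} (hA : A.PosSemidef) : Matrix n n ℝ :=
  hA.1.eigenvectorUnitary.1 * diagonal ((↑) ∘ (√·) ∘ hA.1.eigenvalues) *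
    (star hA.1.eigenvectorUnitary : Matrix n n ℝ)

open scoped MatrixOrder

open Finset in
theorem Real.one_add_geom_mean_le_geom_mean_one_add {ι : Type*} [Fintype ι] [Nonempty ι]
    {x : ι → ℝ} (hx : ∀ i, 0 ≤ x i) :
    1 + (∏ i, x i) ^ (Fintype.card ι : ℝ)⁻¹ ≤ (∏ i, (1 + x i)) ^ (Fintype.card ι : ℝ)⁻¹ := by
  set w : ℝ := (Fintype.card ι : ℝ)⁻¹
  have hw : ∑ _i : ι, w = 1 := by simp [w]
  have amgm : ∀ z : ι → ℝ, (∀ i, 0 ≤ z i) → (∏ i, z i) ^ w ≤ ∑ i, w * z i := fun z hz => by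
    rw [← Real.finsetProd_rpow _ _ fun i _ => hz i]
    exact Real.geom_mean_le_arith_mean_weighted _ _ _ (fun _ _ => by positivity) hw
      fun i _ => hz i
  have hpos : ∀ i, 0 < 1 + x i := fun i => by linarith [hx i]
  have hprod : 0 < ∏ i, (1 + x i) := prod_pos fun i _ => hpos i
  -- AM-GM for `1 / (1 + xᵢ)` and for `xᵢ / (1 + xᵢ)`: the two arithmetic means add up to `1`
  have key : (∏ i, (1 + x i)⁻¹) ^ w + (∏ i, (x i / (1 + x i))) ^ w ≤ 1 := by
    calc _ ≤ ∑ i, w * (1 + x i)⁻¹ + ∑ i, w * (x i / (1 + x i)) :=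
          add_le_add (amgm _ fun i => (inv_pos.mpr (hpos i)).le)
            (amgm _ fun i => div_nonneg (hx i) (hpos i).le)
      _ = ∑ _i : ι, w := by
        rw [← sum_add_distrib]
        refine sum_congr rfl fun i _ => ?_
        field_simp [(hpos i).ne']
      _ = 1 := hw
  rwa [prod_inv_distrib, prod_div_distrib, Real.inv_rpow hprod.le,
    Real.div_rpow (prod_nonneg fun i _ => hx i) hprod.le, inv_eq_one_div, ← add_div,
    div_le_one (by positivity)] at key

namespace Matrix

variable {n : Type*} [Fintype n] [DecidableEq n]

theorem PosSemidef.sqrt_eq_cfc_sqrt {A : Matrix n n ℝ} (hA : A.PosSemidef) :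
    hA.sqrt = CFC.sqrt A := by
  rw [CFC.sqrt_eq_real_sqrt A hA.nonneg, cfcₙ_eq_cfc, hA.1.cfc_eq]
  rfl

theorem PosSemidef.sqrt_mul_self {A : Matrix n n ℝ} (hA : A.PosSemidef) :
    hA.sqrt * hA.sqrt = A := by
  rw [hA.sqrt_eq_cfc_sqrt, CFC.sqrt_mul_sqrt_self A hA.nonneg]

theorem PosSemidef.conjTranspose_sqrt {A : Matrix n n ℝ} (hA : A.PosSemidef) :
    hA.sqrtᴴ = hA.sqrt := by
  rw [hA.sqrt_eq_cfc_sqrt]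
  exact (CFC.sqrt_nonneg A).posSemidef.1

theorem PosSemidef.commute_sqrt {A B : Matrix n n ℝ} (hA : A.PosSemidef) (h : Commute A B) :
    Commute hA.sqrt B := by
  rw [hA.sqrt_eq_cfc_sqrt, CFC.sqrt_eq_cfc]
  exact h.cfc_nnreal _

theorem _root_.Commute.nonsing_inv_right {A B : Matrix n n ℝ} (h : Commute A B) :
    Commute A B⁻¹ := by
  by_cases hB : IsUnit B
  · simpa [coe_units_inv] using h.units_inv_right (u := hB.unit)
  · rw [nonsing_inv_eq_ringInverse, Ring.inverse_non_unit _ hB]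
    exact Commute.zero_right A

theorem det_add_mul_mul {k α : Type*} [Fintype k] [DecidableEq k] [CommRing α]
    {X : Matrix n n α} {Z : Matrix k k α} (U : Matrix n k α) (V : Matrix k n α)
    (hX : IsUnit X.det) (hZ : IsUnit Z.det) :
    (X + U * Z * V).det = X.det * Z.det * (Z⁻¹ + V * X⁻¹ * U).det := by
  have h : 1 + Z * V * X⁻¹ * U = Z * (Z⁻¹ + V * X⁻¹ * U) := by
    rw [Matrix.mul_add, mul_nonsing_inv Z hZ]
    simp only [Matrix.mul_assoc]
  rw [Matrix.mul_assoc U, det_add_mul _ _ hX, h, det_mul]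
  ring

theorem IsHermitian.det_cfc {A : Matrix n n ℝ} (hA : A.IsHermitian) (f : ℝ → ℝ) :
    (cfc f A).det = ∏ i, f (hA.eigenvalues i) := by
  rw [hA.cfc_eq]
  simp [IsHermitian.cfc, -Unitary.conjStarAlgAut_apply]

theorem PosSemidef.one_add_det_rpow_le [Nonempty n] {S : Matrix n n ℝ} (hS : S.PosSemidef) :
    1 + S.det ^ (Fintype.card n : ℝ)⁻¹ ≤ (1 + S).det ^ (Fintype.card n : ℝ)⁻¹ := by
  have h1S : 1 + S = cfc (fun x : ℝ => 1 + x) S := by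
    rw [cfc_const_add .., cfc_id' .., map_one]
  rw [h1S, hS.1.det_cfc, hS.1.det_eq_prod_eigenvalues]
  simpa using Real.one_add_geom_mean_le_geom_mean_one_add hS.eigenvalues_nonneg

theorem PosSemidef.det_rpow_add_le_of_posDef [Nonempty n] {P Q : Matrix n n ℝ}
    (hP : P.PosSemidef) (hQ : Q.PosDef) :
    P.det ^ (Fintype.card n : ℝ)⁻¹ + Q.det ^ (Fintype.card n : ℝ)⁻¹ ≤
      (P + Q).det ^ (Fintype.card n : ℝ)⁻¹ := by
  set r : ℝ := (Fintype.card n : ℝ)⁻¹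
  obtain ⟨V, rfl⟩ := CStarAlgebra.nonneg_iff_eq_star_mul_self.mp hQ.posSemidef.nonneg
  rw [star_eq_conjTranspose] at hQ ⊢
  have hV : IsUnit V.det :=
    (isUnit_iff_isUnit_det V).mp (isUnit_of_mul_isUnit_right hQ.isUnit)
  set S := (V⁻¹)ᴴ * P * V⁻¹
  have hS : S.PosSemidef := hP.conjTranspose_mul_mul_same V⁻¹
  have hPS : P = Vᴴ * S * V := by
    simp only [S, ← Matrix.mul_assoc, ← conjTranspose_mul, nonsing_inv_mul V hV,
      conjTranspose_one, Matrix.one_mul]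
    rw [Matrix.mul_assoc, nonsing_inv_mul V hV, Matrix.mul_one]
  have hdet : ∀ M : Matrix n n ℝ, (Vᴴ * M * V).det = (Vᴴ * V).det * M.det := fun M => by
    simp only [det_mul]; ring
  have hd : 0 ≤ (Vᴴ * V).det := hQ.posSemidef.det_nonneg
  have hsum : P + Vᴴ * V = Vᴴ * (1 + S) * V := by
    rw [hPS, Matrix.mul_add, Matrix.add_mul, Matrix.mul_one, add_comm]
  rw [hsum, hdet, hPS, hdet, Real.mul_rpow hd hS.det_nonneg,
    Real.mul_rpow hd (PosSemidef.one.add hS).det_nonneg]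
  calc _ = (Vᴴ * V).det ^ r * (1 + S.det ^ r) := by ring
    _ ≤ _ := mul_le_mul_of_nonneg_left hS.one_add_det_rpow_le (by positivity)

theorem PosSemidef.det_rpow_add_le [Nonempty n] {P Q : Matrix n n ℝ}
    (hP : P.PosSemidef) (hQ : Q.PosSemidef) :
    P.det ^ (Fintype.card n : ℝ)⁻¹ + Q.det ^ (Fintype.card n : ℝ)⁻¹ ≤
      (P + Q).det ^ (Fintype.card n : ℝ)⁻¹ := by
  by_cases hQ' : Q.PosDef
  · exact hP.det_rpow_add_le_of_posDef hQ'
  by_cases hP' : P.PosDef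
  · rw [add_comm, add_comm P]
    exact hQ.det_rpow_add_le_of_posDef hP'
  rw [hP.posDef_iff_det_ne_zero, not_not] at hP'
  rw [hQ.posDef_iff_det_ne_zero, not_not] at hQ'
  rw [hP', hQ', Real.zero_rpow (by simp), zero_add]
  exact Real.rpow_nonneg (hP.add hQ).det_nonneg _

theorem costa_det_inequality [Nonempty n] {T SX SZ : Matrix n n ℝ} (hX : SX.PosDef)
    (hZ : SZ.PosDef) (hT : Tᴴ = T) (hTI : (1 - T * T).PosSemidef) (hTZ : Commute T SZ) :
    (1 - T * T).det ^ (Fintype.card n : ℝ)⁻¹ * SX.det ^ (Fintype.card n : ℝ)⁻¹ +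
        (T * T).det ^ (Fintype.card n : ℝ)⁻¹ * (SX + SZ).det ^ (Fintype.card n : ℝ)⁻¹ ≤
      (SX + T * SZ * T).det ^ (Fintype.card n : ℝ)⁻¹ := by
  set r : ℝ := (Fintype.card n : ℝ)⁻¹
  have hTZ' : Commute T SZ⁻¹ := hTZ.nonsing_inv_right
  set P := (1 - T * T) * SZ⁻¹
  set Q := T * (SZ⁻¹ + SX⁻¹) * T
  have hPQ : SZ⁻¹ + T * SX⁻¹ * T = P + Q := by
    simp only [P, Q, Matrix.mul_add, Matrix.add_mul, Matrix.sub_mul, Matrix.one_mul,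
      Matrix.mul_assoc, hTZ'.eq]
    abel
  have hP : P.PosSemidef :=
    (Commute.mul_nonneg hTI.nonneg hZ.inv.posSemidef.nonneg
      ((Commute.one_left _).sub_left (hTZ'.mul_left hTZ'))).posSemidef
  have hQ : Q.PosSemidef := by
    simpa only [hT] using (hZ.inv.add hX.inv).posSemidef.mul_mul_conjTranspose_same T
  have hXu : IsUnit SX.det := hX.det_pos.ne'.isUnit
  have hZu : IsUnit SZ.det := hZ.det_pos.ne'.isUnit
  have hM : (SX + T * SZ * T).det = SX.det * SZ.det * (P + Q).det := by
    rw [det_add_mul_mul T T hXu hZu, hPQ]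
  have hXZ : (SX + SZ).det = SX.det * SZ.det * (SZ⁻¹ + SX⁻¹).det := by
    simpa using det_add_mul_mul (1 : Matrix n n ℝ) 1 hXu hZu
  have hPdet : P.det = (1 - T * T).det * SZ.det⁻¹ := by
    rw [det_mul, det_nonsing_inv, Ring.inverse_eq_inv']
  have hQdet : Q.det = (T * T).det * (SZ⁻¹ + SX⁻¹).det := by
    simp only [Q, det_mul]; ring
  have hx := hX.det_pos
  have hz := hZ.det_pos
  have hs := (hZ.inv.add hX.inv).det_pos
  have ha := hTI.det_nonneg
  have hd : 0 ≤ (T * T).det := by rw [det_mul]; exact mul_self_nonneg _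
  rw [hM, hXZ]
  calc _ = (SX.det * SZ.det) ^ r * (P.det ^ r + Q.det ^ r) := by
        simp only [hPdet, hQdet, Real.mul_rpow, Real.inv_rpow, hx.le, hz.le, hs.le, ha, hd,
          inv_nonneg, mul_nonneg]
        field_simp
    _ ≤ (SX.det * SZ.det) ^ r * (P + Q).det ^ r := by gcongr; exact hP.det_rpow_add_le hQ
    _ = _ := by rw [Real.mul_rpow (by positivity) (hP.add hQ).det_nonneg]

end Matrix

theorem stmt_9 {n : ℕ} (hn : 0 < n) (A SZ SX : Matrix (Fin n) (Fin n) ℝ)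
    (hA : A.PosDef) (hZ : SZ.PosDef) (hX : SX.PosDef)
    (hAI : (1 - A).PosSemidef) (hcomm : A * SZ = SZ * A) :
    (SX + hA.posSemidef.sqrt * SZ * hA.posSemidef.sqrt).det ^ ((n : ℝ)⁻¹) ≥
      (1 - A).det ^ ((n : ℝ)⁻¹) * SX.det ^ ((n : ℝ)⁻¹) +
        A.det ^ ((n : ℝ)⁻¹) * (SX + SZ).det ^ ((n : ℝ)⁻¹) := by
  have : Nonempty (Fin n) := ⟨⟨0, hn⟩⟩
  have hTT := hA.posSemidef.sqrt_mul_self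
  have h := Matrix.costa_det_inequality hX hZ hA.posSemidef.conjTranspose_sqrt
    (hTT.symm ▸ hAI) (hA.posSemidef.commute_sqrt hcomm)
  rwa [hTT, Fintype.card_fin] at h
end

section
/- For diagonal A = diag(a₁,…,aₙ) with aᵢ ∈ [0,1] and any real symmetric positive definite Σ: det(Σ + A)^{1/n} ≥ (∏ᵢ(1−aᵢ))^{1/n}·det(Σ)^{1/n} + (∏ᵢ aᵢ)^{1/n}·det(Σ + I)^{1/n}. -/
/-!
Let `M = S + diag a` and let `R` be the positive square root of `M⁻¹`. AM–GM on the eigenvalues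
gives `det P ^ (1/n) ≤ tr P / n` for positive semidefinite `P`, hence
`(det P * det Q) ^ (1/n) ≤ tr (P Q) / n` for positive semidefinite `P`, `Q`. Apply this to the pairs
`(S, R diag(1 - a) R)` and `(S + 1, R diag(a) R)`: the determinant products are
`∏ (1 - aᵢ) det S / det M` and `∏ aᵢ det (S + 1) / det M`, while the two traces add up to
`tr (M M⁻¹) = n`.
-/

open Matrix

namespace Matrix

variable {m : Type*} [Fintype m] [DecidableEq m]

open scoped MatrixOrder in
lemma PosSemidef.exists_sqrt {Q : Matrix m m ℝ} (hQ : Q.PosSemidef) :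
    ∃ R : Matrix m m ℝ, R.PosSemidef ∧ R * R = Q :=
  ⟨CFC.sqrt Q, (CFC.sqrt_nonneg Q).posSemidef, CFC.sqrt_mul_sqrt_self Q hQ.nonneg⟩

lemma PosSemidef.det_rpow_le_trace_div [Nonempty m] {P : Matrix m m ℝ} (hP : P.PosSemidef) :
    P.det ^ (Fintype.card m : ℝ)⁻¹ ≤ P.trace / Fintype.card m := by
  have hcard : (0 : ℝ) < Fintype.card m := by exact_mod_cast Fintype.card_pos
  have h := Real.geom_mean_le_arith_mean Finset.univ (fun _ => (1 : ℝ)) hP.1.eigenvalues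
    (fun _ _ => zero_le_one) (by simpa using hcard) (fun i _ => hP.eigenvalues_nonneg i)
  simpa [hP.1.det_eq_prod_eigenvalues, hP.1.trace_eq_sum_eigenvalues] using h

lemma PosSemidef.det_mul_rpow_le_trace_mul [Nonempty m] {P Q : Matrix m m ℝ}
    (hP : P.PosSemidef) (hQ : Q.PosSemidef) :
    (P.det * Q.det) ^ (Fintype.card m : ℝ)⁻¹ ≤ (P * Q).trace / Fintype.card m := by
  obtain ⟨R, hR, rfl⟩ := hQ.exists_sqrt
  have hRPR : (R * P * R).PosSemidef := by
    simpa only [hR.1.eq] using hP.mul_mul_conjTranspose_same R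
  convert hRPR.det_rpow_le_trace_div using 2
  · rw [det_mul, det_mul, det_mul]; ring
  · rw [← Matrix.mul_assoc, trace_mul_comm, ← Matrix.mul_assoc]

section CommRing

variable {α : Type*} [CommRing α]

lemma det_mul_diagonal_mul (R : Matrix m m α) (d : m → α) :
    (R * diagonal d * R).det = (∏ i, d i) * (R * R).det := by
  rw [det_mul, det_mul, det_mul, det_diagonal]; ring

lemma trace_mul_diagonal_one_sub_add_trace (S R : Matrix m m α) (a : m → α) :
    (S * (R * diagonal (1 - a) * R)).trace + ((S + 1) * (R * diagonal a * R)).trace =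
      ((S + diagonal a) * (R * R)).trace := by
  have hD : diagonal (1 - a) = 1 - diagonal a := by rw [← diagonal_one, diagonal_sub]; rfl
  have h : S * (R * (1 - diagonal a) * R) + (S + 1) * (R * diagonal a * R) =
      S * (R * R) + R * (diagonal a * R) := by noncomm_ring
  rw [hD, ← trace_add, h, trace_add, trace_mul_comm R, Matrix.add_mul, trace_add,
    Matrix.mul_assoc]

end CommRing

theorem PosDef.weighted_det_rpow_add_le_det_add_diagonal_rpow [Nonempty m] {S : Matrix m m ℝ}
    (hS : S.PosDef) {a : m → ℝ} (ha : ∀ i, a i ∈ Set.Icc (0 : ℝ) 1) :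
    ((∏ i, (1 - a i)) * S.det) ^ (Fintype.card m : ℝ)⁻¹ +
        ((∏ i, a i) * (S + 1).det) ^ (Fintype.card m : ℝ)⁻¹ ≤
      (S + diagonal a).det ^ (Fintype.card m : ℝ)⁻¹ := by
  have hcard : (0 : ℝ) < Fintype.card m := by exact_mod_cast Fintype.card_pos
  have hS₁ : (S + 1).PosDef := hS.add_posSemidef PosSemidef.one
  have hM : (S + diagonal a).PosDef :=
    hS.add_posSemidef (PosSemidef.diagonal fun i => (ha i).1)
  have hdet := hM.det_pos
  obtain ⟨R, hR, hRR⟩ := hM.inv.posSemidef.exists_sqrt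
  have hRdR {d : m → ℝ} (hd : ∀ i, 0 ≤ d i) : (R * diagonal d * R).PosSemidef := by
    simpa only [hR.1.eq] using (PosSemidef.diagonal hd).mul_mul_conjTranspose_same R
  have hsub : ∀ i, 0 ≤ 1 - a i := fun i => sub_nonneg.2 (ha i).2
  have h₁ := hS.posSemidef.det_mul_rpow_le_trace_mul (hRdR (d := 1 - a) hsub)
  have h₂ := hS₁.posSemidef.det_mul_rpow_le_trace_mul (hRdR fun i => (ha i).1)
  have htrace := trace_mul_diagonal_one_sub_add_trace S R a
  rw [hRR, mul_nonsing_inv _ hdet.ne'.isUnit, trace_one] at htrace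
  rw [det_mul_diagonal_mul, hRR, det_nonsing_inv] at h₁ h₂
  simp only [Ring.inverse_eq_inv', Pi.sub_apply, Pi.one_apply] at h₁ h₂
  have hscale {p q : ℝ} (hp : 0 ≤ p) (hq : 0 ≤ q) :
      (q * (p * (S + diagonal a).det⁻¹)) ^ (Fintype.card m : ℝ)⁻¹ =
        (p * q) ^ (Fintype.card m : ℝ)⁻¹ / (S + diagonal a).det ^ (Fintype.card m : ℝ)⁻¹ := by
    rw [← Real.div_rpow (by positivity) hdet.le]; ring_nf
  rw [hscale (Finset.prod_nonneg fun i _ => hsub i) hS.det_pos.le] at h₁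
  rw [hscale (Finset.prod_nonneg fun i _ => (ha i).1) hS₁.det_pos.le] at h₂
  rw [← div_le_one (Real.rpow_pos_of_pos hdet _), add_div]
  calc _ ≤ (S * (R * diagonal (1 - a) * R)).trace / Fintype.card m +
        ((S + 1) * (R * diagonal a * R)).trace / Fintype.card m := add_le_add h₁ h₂
    _ = 1 := by rw [← add_div, htrace, div_self hcard.ne']

end Matrix

theorem stmt_19 {n : ℕ} (hn : 0 < n) (S : Matrix (Fin n) (Fin n) ℝ)
    (hS : S.PosDef) (a : Fin n → ℝ) (ha : ∀ i, a i ∈ Set.Icc (0 : ℝ) 1) :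
    (S + diagonal a).det ^ ((n : ℝ)⁻¹) ≥
      (∏ i, (1 - a i)) ^ ((n : ℝ)⁻¹) * S.det ^ ((n : ℝ)⁻¹) +
        (∏ i, a i) ^ ((n : ℝ)⁻¹) * (S + 1).det ^ ((n : ℝ)⁻¹) := by
  have : Nonempty (Fin n) := Fin.pos_iff_nonempty.mp hn
  have h := hS.weighted_det_rpow_add_le_det_add_diagonal_rpow ha
  rwa [Fintype.card_fin, Real.mul_rpow (Finset.prod_nonneg fun i _ => sub_nonneg.2 (ha i).2)
    hS.det_pos.le, Real.mul_rpow (Finset.prod_nonneg fun i _ => (ha i).1)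
    (hS.add_posSemidef PosSemidef.one).det_pos.le] at h
end
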